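/- Second-order expansion of the element-to-target distance: for a target at distance r > 0 and angle θ from a centered array, and an element offset x along the array axis with |x| < r, the exact distance √(r² − 2 r x sinθ + x²) satisfies |√(r² − 2 r x sinθ + x²) − (r − x sinθ + x² cos²θ/(2r))| ≤ C·|x|³/r² for some constant C independent of x (uniformly for |x| ≤ r/2). -/

import Mathlib

/-! Write `g` for the exact distance and `p` for its Fresnel approximation. Expanding `p²` shows that
`g² - p² = s (1 - s²) x³ / r - (1 - s²)² x⁴ / (4 r²)` exactly, which is `O(|x|³ / r)`. Both `g` and `p`
are at least `r - |x| ≥ r / 2`, so `g + p ≥ r` and `|g - p| = |g² - p²| / (g + p) = O(|x|³ / r²)`. -/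

open Real

theorem abs_sub_le_abs_sq_sub_sq_div {a b r : ℝ} (hr : 0 < r) (hab : r ≤ a + b) :
    |a - b| ≤ |a ^ 2 - b ^ 2| / r := by
  rw [le_div_iff₀ hr, sq_sub_sq, abs_mul, mul_comm |a + b|]
  exact mul_le_mul_of_nonneg_left (hab.trans (le_abs_self _)) (abs_nonneg _)

theorem mul_le_abs_of_abs_le_one {x s : ℝ} (hs : |s| ≤ 1) : x * s ≤ |x| :=
  calc x * s ≤ |x| * |s| := (le_abs_self _).trans (abs_mul x s).le
    _ ≤ |x| := mul_le_of_le_one_right (abs_nonneg x) hs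

noncomputable def fresnelApprox (r s x : ℝ) : ℝ := r - x * s + x ^ 2 * (1 - s ^ 2) / (2 * r)

section
variable {r s x : ℝ}

theorem sub_abs_sq_le (hr : 0 ≤ r) (hs : |s| ≤ 1) :
    (r - |x|) ^ 2 ≤ r ^ 2 - 2 * r * x * s + x ^ 2 := by
  have := mul_le_mul_of_nonneg_left (mul_le_abs_of_abs_le_one (x := x) hs) hr
  nlinarith [sq_abs x]

theorem sub_abs_le_sqrt (hr : 0 ≤ r) (hs : |s| ≤ 1) :
    r - |x| ≤ √(r ^ 2 - 2 * r * x * s + x ^ 2) :=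
  (le_abs_self _).trans (abs_le_sqrt (sub_abs_sq_le hr hs))

theorem sub_abs_le_fresnelApprox (hr : 0 ≤ r) (hs : |s| ≤ 1) : r - |x| ≤ fresnelApprox r s x := by
  have hc : 0 ≤ 1 - s ^ 2 := by nlinarith [sq_abs s, abs_nonneg s]
  have : 0 ≤ x ^ 2 * (1 - s ^ 2) / (2 * r) := by positivity
  unfold fresnelApprox; linarith [mul_le_abs_of_abs_le_one (x := x) hs]

theorem sq_sub_fresnelApprox_sq (hr : r ≠ 0) :
    (r ^ 2 - 2 * r * x * s + x ^ 2) - fresnelApprox r s x ^ 2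
      = s * (1 - s ^ 2) * x ^ 3 / r - (1 - s ^ 2) ^ 2 * x ^ 4 / (4 * r ^ 2) := by
  unfold fresnelApprox; field_simp; ring

theorem abs_fresnel_remainder_le (hr : 0 < r) (hs : |s| ≤ 1) (hx : |x| ≤ r / 2) :
    |s * (1 - s ^ 2) * x ^ 3 / r - (1 - s ^ 2) ^ 2 * x ^ 4 / (4 * r ^ 2)| ≤ 2 * |x| ^ 3 / r := by
  have hc : |1 - s ^ 2| ≤ 1 := by
    rw [abs_le]; constructor <;> nlinarith [sq_abs s, abs_nonneg s]
  have hx4 : |x| ^ 4 ≤ |x| ^ 3 * r := by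
    rw [pow_succ]; gcongr; linarith
  calc _ ≤ |s * (1 - s ^ 2) * x ^ 3 / r| + |(1 - s ^ 2) ^ 2 * x ^ 4 / (4 * r ^ 2)| := abs_sub _ _
    _ = |s| * |1 - s ^ 2| * |x| ^ 3 / r + |1 - s ^ 2| ^ 2 * |x| ^ 4 / (4 * r ^ 2) := by
      simp only [abs_div, abs_mul, abs_pow, abs_of_pos hr, abs_of_pos (by positivity : 0 < 4 * r ^ 2)]
    _ ≤ 1 * 1 * |x| ^ 3 / r + 1 ^ 2 * (|x| ^ 3 * r) / (4 * r ^ 2) := by gcongr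
    _ = 5 / 4 * |x| ^ 3 / r := by field_simp; ring
    _ ≤ 2 * |x| ^ 3 / r := by gcongr; norm_num
end

theorem fresnel_second_order_expansion (r θ : ℝ) (hr : 0 < r) :
    ∃ C > 0, ∀ x : ℝ, |x| ≤ r / 2 →
      |Real.sqrt (r ^ 2 - 2 * r * x * Real.sin θ + x ^ 2)
        - (r - x * Real.sin θ + x ^ 2 * (1 - Real.sin θ ^ 2) / (2 * r))|
        ≤ C * |x| ^ 3 / r ^ 2 := by
  refine ⟨2, two_pos, fun x hx => ?_⟩
  have hs := abs_sin_le_one θ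
  have hsum : r ≤ √(r ^ 2 - 2 * r * x * sin θ + x ^ 2) + fresnelApprox r (sin θ) x := by
    linarith [sub_abs_le_sqrt (x := x) hr.le hs, sub_abs_le_fresnelApprox (x := x) hr.le hs]
  have hsq : √(r ^ 2 - 2 * r * x * sin θ + x ^ 2) ^ 2 = r ^ 2 - 2 * r * x * sin θ + x ^ 2 :=
    sq_sqrt ((sq_nonneg _).trans (sub_abs_sq_le hr.le hs))
  calc _ ≤ _ := abs_sub_le_abs_sq_sub_sq_div hr hsum
    _ ≤ 2 * |x| ^ 3 / r / r := by
      rw [hsq, sq_sub_fresnelApprox_sq hr.ne']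
      gcongr; exact abs_fresnel_remainder_le hr hs hx
    _ = 2 * |x| ^ 3 / r ^ 2 := by rw [div_div, sq]
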